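/- Let I ⊆ ℝ be an interval, f : I → ℝ convex on I, x an interior point of I, and h > 0 such that x − h/2 and x + h/2 both lie in I. Then, with a = x − h/2 and b = x + h/2: 0 ≤ (1/8)·h²·[ f′₊(x) − f′₋(x) ] ≤ h·(f(a) + f(b))/2 − ∫_{x−h/2}^{x+h/2} f(t) dt. -/

import Mathlib

open MeasureTheory Set intervalIntegral

/-! Split `[x - h/2, x + h/2]` at `x`. On each half a convex function lies below its chord, so the
integral is at most `h/4 · (f a + 2 f x + f b)`; on the other hand `f` lies above the one-sided
tangent lines at `x`, so `f a + f b - 2 f x ≥ h/2 · (f′₊(x) - f′₋(x))`, and `f′₋(x) ≤ f′₊(x)` since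
`x` is interior. -/

namespace ConvexOn

variable {s : Set ℝ} {f : ℝ → ℝ} {a b : ℝ}

lemma le_chord (hf : ConvexOn ℝ s f) (ha : a ∈ s) (hb : b ∈ s) {t : ℝ} (ht : t ∈ Icc a b) :
    f t ≤ f a + slope f a b * (t - a) := by
  rcases ht.1.eq_or_lt with rfl | hat
  · simp
  have hts : t ∈ s := hf.1.ordConnected.out ha hb ht
  have hsec := hf.secant_mono ha hts hb hat.ne' (hat.trans_le ht.2).ne' ht.2
  rw [div_le_iff₀ (sub_pos.2 hat)] at hsec
  rw [slope_def_field]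
  linarith

lemma exists_abs_le_on_Icc (hf : ConvexOn ℝ (Icc a b) f) : ∃ C, ∀ t ∈ Icc a b, |f t| ≤ C := by
  by_cases hab : a ≤ b
  swap
  · exact ⟨0, fun t ht => absurd (ht.1.trans ht.2) hab⟩
  set M := max (f a) (f b)
  have hupper : ∀ t ∈ Icc a b, f t ≤ M := fun t ht =>
    hf.le_max_of_mem_segment (left_mem_Icc.2 hab) (right_mem_Icc.2 hab)
      (by rwa [segment_eq_Icc hab])
  -- reflecting `t` about the midpoint `m` gives `2 f m ≤ f t + f (a + b - t)`
  set m := (a + b) / 2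
  refine ⟨max |2 * f m - M| |M|, fun t ht => abs_le_max_abs_abs ?_ (hupper t ht)⟩
  have hrefl : a + b - t ∈ Icc a b := ⟨by linarith [ht.2], by linarith [ht.1]⟩
  have hmid := hf.2 ht hrefl (by norm_num : (0 : ℝ) ≤ 1 / 2) (by norm_num : (0 : ℝ) ≤ 1 / 2)
    (by norm_num)
  simp only [smul_eq_mul] at hmid
  rw [show 1 / 2 * t + 1 / 2 * (a + b - t) = m by ring] at hmid
  linarith [hupper _ hrefl]

lemma intervalIntegrable (hf : ConvexOn ℝ s f) (ha : a ∈ s) (hb : b ∈ s) :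
    IntervalIntegrable f volume a b := by
  wlog hab : a ≤ b generalizing a b
  · exact (this hb ha (le_of_not_ge hab)).symm
  have hfI : ConvexOn ℝ (Icc a b) f := hf.subset (hf.1.ordConnected.out ha hb) (convex_Icc a b)
  have hcont : ContinuousOn f (Ioo a b) := by
    simpa only [interior_Icc] using hfI.continuousOn_interior
  obtain ⟨C, hC⟩ := hfI.exists_abs_le_on_Icc
  rw [intervalIntegrable_iff_integrableOn_Ioo_of_le hab]
  refine .of_bound measure_Ioo_lt_top (hcont.aestronglyMeasurable measurableSet_Ioo) C ?_
  rw [ae_restrict_iff' measurableSet_Ioo]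
  exact ae_of_all _ fun t ht => hC t (Ioo_subset_Icc_self ht)

lemma integral_le_trapezoid (hf : ConvexOn ℝ s f) (ha : a ∈ s) (hb : b ∈ s) (hab : a ≤ b) :
    ∫ t in a..b, f t ≤ (f a + f b) / 2 * (b - a) := by
  have hchord := integral_mono_on hab (hf.intervalIntegrable ha hb)
    ((by fun_prop : Continuous fun t => f a + slope f a b * (t - a)).intervalIntegrable a b)
    (fun t ht => hf.le_chord ha hb ht)
  refine hchord.trans_eq ?_
  rw [intervalIntegral.integral_add intervalIntegrable_const
    ((by fun_prop : Continuous fun t => slope f a b * (t - a)).intervalIntegrable a b)]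
  simp only [intervalIntegral.integral_const, intervalIntegral.integral_const_mul,
    integral_comp_sub_right (fun t => t), integral_id, smul_eq_mul]
  rcases hab.eq_or_lt with rfl | hlt
  · simp
  rw [slope_def_field]
  field_simp
  ring

lemma add_mul_sub_le_of_hasDerivWithinAt_Ioi {x y f' : ℝ} (hf : ConvexOn ℝ s f) (hx : x ∈ s)
    (hy : y ∈ s) (hxy : x < y) (hf' : HasDerivWithinAt f f' (Ioi x) x) :
    f x + f' * (y - x) ≤ f y := by
  have := hf.le_slope_of_hasDerivWithinAt_Ioi hx hy hxy hf'
  rw [slope_def_field, le_div_iff₀ (sub_pos.2 hxy)] at this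
  linarith

lemma add_mul_sub_le_of_hasDerivWithinAt_Iio {x y f' : ℝ} (hf : ConvexOn ℝ s f) (hx : x ∈ s)
    (hy : y ∈ s) (hxy : x < y) (hf' : HasDerivWithinAt f f' (Iio y) y) :
    f y + f' * (x - y) ≤ f x := by
  have := hf.slope_le_of_hasDerivWithinAt_Iio hx hy hxy hf'
  rw [slope_def_field, div_le_iff₀ (sub_pos.2 hxy)] at this
  linarith

end ConvexOn

/-- **Remark 1**: if `f : I → ℝ` is convex on an interval `I`, `x` is an interior
point of `I` and `h > 0` is such that `x − h/2, x + h/2 ∈ I`, then with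
`a = x − h/2`, `b = x + h/2`:
`0 ≤ (1/8) h² [f′₊(x) − f′₋(x)] ≤ h (f(a)+f(b))/2 − ∫_{x−h/2}^{x+h/2} f`. -/
theorem trapezoid_convex_symmetric_interval
    (I : Set ℝ) (f : ℝ → ℝ) (hf : ConvexOn ℝ I f)
    (x : ℝ) (hx : x ∈ interior I) (h : ℝ) (hh : 0 < h)
    (ha : x - h / 2 ∈ I) (hb : x + h / 2 ∈ I) (fdp fdm : ℝ)
    (hfdp : HasDerivWithinAt f fdp (Set.Ici x) x)
    (hfdm : HasDerivWithinAt f fdm (Set.Iic x) x) :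
    0 ≤ (1 / 8) * h ^ 2 * (fdp - fdm) ∧
      (1 / 8) * h ^ 2 * (fdp - fdm) ≤
        (f (x - h / 2) + f (x + h / 2)) / 2 * h -
          ∫ t in (x - h / 2)..(x + h / 2), f t := by
  have hxI : x ∈ I := interior_subset hx
  have hax : x - h / 2 < x := by linarith
  have hxb : x < x + h / 2 := by linarith
  have hfdp' := hfdp.mono Ioi_subset_Ici_self
  have hfdm' := hfdm.mono Iio_subset_Iic_self
  have hjump : fdm ≤ fdp := by
    simpa only [hfdm'.derivWithin (uniqueDiffWithinAt_Iio x),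
      hfdp'.derivWithin (uniqueDiffWithinAt_Ioi x)] using
      hf.leftDeriv_le_rightDeriv_of_mem_interior hx
  have hright := hf.add_mul_sub_le_of_hasDerivWithinAt_Ioi hxI hb hxb hfdp'
  have hleft := hf.add_mul_sub_le_of_hasDerivWithinAt_Iio ha hxI hax hfdm'
  have hint_left := hf.integral_le_trapezoid ha hxI hax.le
  have hint_right := hf.integral_le_trapezoid hxI hb hxb.le
  rw [← integral_add_adjacent_intervals (hf.intervalIntegrable ha hxI)
    (hf.intervalIntegrable hxI hb)]
  refine ⟨mul_nonneg (by positivity) (sub_nonneg.2 hjump), ?_⟩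
  linarith [mul_le_mul_of_nonneg_left (add_le_add hright hleft) hh.le]
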